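/- arXiv:2109.02000 — 6 statements merged into one kernel-verified Lean document; each statement's English description precedes it below -/
import Mathlib

section
/- For every monic polynomial f ∈ 𝔽_q[x] of degree ℓ+t with f(0) ≠ 0, there exists a unique monic polynomial g ∈ 𝔽_q[x] of degree ℓ+t with g(0) ≠ 0 such that the product fg is type-I equivalent to the constant polynomial 1, i.e., the reversal of fg is congruent to 1 modulo x^{ℓ+1} and fg ≡ 1 (mod x^t). -/
/-!
A polynomial `g` of degree `ℓ + t` is determined by its `t` lowest coefficients together with
the `ℓ + 1` lowest coefficients of its reversal, and these two blocks of coefficients are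
disjoint. Since `(f * g).reverse = f.reverse * g.reverse`, the condition on `g` says exactly
that `g` is an inverse of `f` modulo `X ^ t` and `g.reverse` an inverse of `f.reverse` modulo
`X ^ (ℓ + 1)`. Such inverses exist because `f(0) ≠ 0` and `f.reverse(0) = 1`, and they are
unique modulo the respective powers of `X`; gluing the two blocks gives the unique `g`, which
is monic because `g.reverse(0) = 1`.
-/

open Polynomial

/-- Two monic polynomials with nonzero constant term are type-I equivalent if their
reversals agree modulo `X^(ℓ+1)` and they agree modulo `X^t`. -/
def TypeIEquiv {R : Type*} [CommRing R] (ℓ t : ℕ) (f g : Polynomial R) : Prop :=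
  (X ^ (ℓ + 1) : Polynomial R) ∣ (f.reverse - g.reverse) ∧
  (X ^ t : Polynomial R) ∣ (f - g)

theorem dvd_mul_sub_one_iff_dvd_sub {R : Type*} [CommRing R] {m p a b : R}
    (ha : m ∣ p * a - 1) : m ∣ p * b - 1 ↔ m ∣ b - a := by
  constructor
  · intro hb
    have h : b - a = a * (p * b - 1) - b * (p * a - 1) := by ring
    exact h ▸ dvd_sub (hb.mul_left a) (ha.mul_left b)
  · intro hba
    have h : p * b - 1 = p * (b - a) + (p * a - 1) := by ring
    exact h ▸ dvd_add (hba.mul_left p) ha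

namespace Polynomial

variable {R : Type*}

theorem coeff_zero_eq_of_X_pow_dvd_sub [Ring R] {n : ℕ} {p q : R[X]} (hn : n ≠ 0)
    (h : X ^ n ∣ p - q) : p.coeff 0 = q.coeff 0 := by
  simpa [sub_eq_zero] using X_pow_dvd_iff.mp h 0 (Nat.pos_of_ne_zero hn)

theorem exists_X_pow_dvd_mul_sub_one [CommRing R] {p : R[X]} (hp : IsUnit (p.coeff 0))
    (n : ℕ) : ∃ u : R[X], X ^ n ∣ p * u - 1 := by
  obtain ⟨q, hq⟩ : X ∣ p - C (p.coeff 0) := by simp [X_dvd_iff]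
  obtain ⟨w, hw⟩ := hp.exists_left_inv
  have hwC : C w * C (p.coeff 0) = 1 := by rw [← C_mul, hw, C_1]
  have hX : IsCoprime (X : R[X]) p :=
    ⟨-C w * q, C w, by linear_combination C w * hq + hwC⟩
  obtain ⟨a, b, hab⟩ := hX.pow_left (m := n)
  exact ⟨b, -a, by linear_combination hab⟩

theorem exists_natDegree_le_X_pow_dvd_sub_and_X_pow_dvd_reflect_sub [Ring R] (ℓ t : ℕ)
    (u v : R[X]) : ∃ g : R[X], g.natDegree ≤ ℓ + t ∧ X ^ t ∣ g - u ∧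
      X ^ (ℓ + 1) ∣ reflect (ℓ + t) g - v := by
  classical
  set g := ofFn (ℓ + t + 1) fun i ↦ if (i : ℕ) < t then u.coeff i else v.coeff (ℓ + t - i)
  have hg : ∀ i ≤ ℓ + t, g.coeff i = if i < t then u.coeff i else v.coeff (ℓ + t - i) :=
    fun i hi ↦ ofFn_coeff_eq_val_of_lt _ (Nat.lt_succ_of_le hi)
  refine ⟨g, natDegree_le_iff_coeff_eq_zero.mpr fun i hi ↦ ofFn_coeff_eq_zero_of_ge _ hi,
    ?_, ?_⟩
  · refine X_pow_dvd_iff.mpr fun i hi ↦ ?_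
    rw [coeff_sub, hg i (by omega), if_pos hi, sub_self]
  · refine X_pow_dvd_iff.mpr fun i hi ↦ ?_
    rw [coeff_sub, coeff_reflect, revAt_le (by omega), hg _ (by omega), if_neg (by omega),
      Nat.sub_sub_self (by omega), sub_self]

theorem eq_of_X_pow_dvd_sub_of_X_pow_dvd_reflect_sub [Ring R] {ℓ t : ℕ} {p q : R[X]}
    (hp : p.natDegree ≤ ℓ + t) (hq : q.natDegree ≤ ℓ + t) (hlow : X ^ t ∣ p - q)
    (hhigh : X ^ (ℓ + 1) ∣ reflect (ℓ + t) p - reflect (ℓ + t) q) : p = q := by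
  ext i
  rw [← sub_eq_zero, ← coeff_sub]
  rcases lt_or_ge i t with hit | hti
  · exact X_pow_dvd_iff.mp hlow i hit
  rcases le_or_gt i (ℓ + t) with hi | hi
  · have := X_pow_dvd_iff.mp hhigh (ℓ + t - i) (by omega)
    rwa [← reflect_sub, coeff_reflect, revAt_le (by omega), Nat.sub_sub_self hi] at this
  · rw [coeff_sub, coeff_eq_zero_of_natDegree_lt (by omega),
      coeff_eq_zero_of_natDegree_lt (by omega), sub_zero]

theorem typeIEquiv_mul_one_iff [CommRing R] [IsDomain R] {ℓ t : ℕ} {f g : R[X]} :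
    TypeIEquiv ℓ t (f * g) 1 ↔
      X ^ (ℓ + 1) ∣ f.reverse * g.reverse - 1 ∧ X ^ t ∣ f * g - 1 := by
  have hone : (1 : R[X]).reverse = 1 := by simpa using reverse_C (1 : R)
  rw [TypeIEquiv, reverse_mul_of_domain, hone]

end Polynomial

theorem exists_unique_typeI_inverse_general
    (F : Type*) [Field F] (ℓ t : ℕ) (ht : 1 ≤ t)
    (f : Polynomial F) (hf : f.Monic)
    (hf0 : f.eval 0 ≠ 0) :
    ∃! g : Polynomial F, g.Monic ∧ g.natDegree = ℓ + t ∧ g.eval 0 ≠ 0 ∧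
      TypeIEquiv ℓ t (f * g) 1 := by
  have hfr0 : f.reverse.coeff 0 = 1 := by rw [coeff_zero_reverse, hf.leadingCoeff]
  have hf0' : IsUnit (f.coeff 0) := by simpa [coeff_zero_eq_eval_zero] using hf0
  obtain ⟨u, hu⟩ := exists_X_pow_dvd_mul_sub_one hf0' t
  obtain ⟨v, hv⟩ := exists_X_pow_dvd_mul_sub_one (p := f.reverse) (by simp [hfr0]) (ℓ + 1)
  have hequiv (y : F[X]) :
      TypeIEquiv ℓ t (f * y) 1 ↔ X ^ (ℓ + 1) ∣ y.reverse - v ∧ X ^ t ∣ y - u := by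
    rw [typeIEquiv_mul_one_iff, dvd_mul_sub_one_iff_dvd_sub hv, dvd_mul_sub_one_iff_dvd_sub hu]
  obtain ⟨g, hg, hgu, hgv⟩ :=
    exists_natDegree_le_X_pow_dvd_sub_and_X_pow_dvd_reflect_sub ℓ t u v
  have hv0 : v.coeff 0 = 1 := by
    simpa [hfr0] using coeff_zero_eq_of_X_pow_dvd_sub (Nat.succ_ne_zero ℓ) hv
  have hgtop : g.coeff (ℓ + t) = 1 := by
    simpa [coeff_reflect, hv0] using coeff_zero_eq_of_X_pow_dvd_sub (Nat.succ_ne_zero ℓ) hgv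
  have hgdeg : g.natDegree = ℓ + t := natDegree_eq_of_le_of_coeff_ne_zero hg (by simp [hgtop])
  have hg0 : g.coeff 0 * f.coeff 0 = 1 := by
    rw [coeff_zero_eq_of_X_pow_dvd_sub (by omega) hgu, mul_comm, ← mul_coeff_zero,
      coeff_zero_eq_of_X_pow_dvd_sub (by omega) hu, coeff_one_zero]
  refine ⟨g, ⟨monic_of_natDegree_le_of_coeff_eq_one _ hg hgtop, hgdeg, ?_, ?_⟩, ?_⟩
  · rw [← coeff_zero_eq_eval_zero]
    exact left_ne_zero_of_mul_eq_one hg0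
  · rw [hequiv, reverse, hgdeg]
    exact ⟨hgv, hgu⟩
  · rintro y ⟨-, hydeg, -, hy⟩
    rw [hequiv, reverse, hydeg] at hy
    exact eq_of_X_pow_dvd_sub_of_X_pow_dvd_reflect_sub hydeg.le hg
      (by simpa using dvd_sub hy.2 hgu) (by simpa using dvd_sub hy.1 hgv)

theorem exists_unique_typeI_inverse
    (F : Type*) [Field F] [Fintype F] (ℓ t : ℕ) (hℓ : 1 ≤ ℓ) (ht : 1 ≤ t)
    (f : Polynomial F) (hf : f.Monic) (hfdeg : f.natDegree = ℓ + t)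
    (hf0 : f.eval 0 ≠ 0) :
    ∃! g : Polynomial F, g.Monic ∧ g.natDegree = ℓ + t ∧ g.eval 0 ≠ 0 ∧
      TypeIEquiv ℓ t (f * g) 1 :=
  exists_unique_typeI_inverse_general F ℓ t ht f hf hf0
end

section
/- Let G be a finite commutative group and let I : ℕ → G → ℂ be any function. Define N : ℕ → G → ℂ by N_m(ε') = Σ_{k | m} (m/k) · Σ_{ε ∈ G with ε^k = ε'} I_{m/k}(ε) for every m ≥ 1 and ε' ∈ G. Then for every d ≥ 1 and every ε ∈ G, I_d(ε) = (1/d) · Σ_{k | d} μ(k) · Σ_{ε₁ ∈ G with ε₁^k = ε} N_{d/k}(ε₁), where μ is the Möbius function. -/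
/-!
Write `T k` for the operator sending `f : G → ℂ` to `ε ↦ ∑_{ε₁ ^ k = ε} f ε₁`, and `J n = n • I n`.
The hypothesis says `N m = ∑_{k ∣ m} T k (J (m / k))`, a Dirichlet convolution `N = T ⋆ J` with
operator coefficients. Since `T (j * k) = T j ∘ T k` and `T 1 = id`, the convolution inverse of `T`
is `k ↦ μ k • T k`: indeed `∑_{j k = n} μ j • T j (T k) = (∑_{j ∣ n} μ j) • T n`, which vanishes
unless `n = 1`. Hence `J = (μ • T) ⋆ N`, which is the claim after dividing by `d`.
-/

open Finset
open scoped ArithmeticFunction.Moebius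

namespace ArithmeticFunction

variable {R M : Type*}

def ofFun [Zero M] (f : ℕ → M) : ArithmeticFunction M :=
  ⟨fun n => if n = 0 then 0 else f n, if_pos rfl⟩

theorem ofFun_apply_of_ne_zero [Zero M] (f : ℕ → M) {n : ℕ} (hn : n ≠ 0) : ofFun f n = f n :=
  if_neg hn

theorem smul_ofFun_apply [Zero R] [AddCommMonoid M] [SMul R M] (f : ArithmeticFunction R)
    (g : ℕ → M) (n : ℕ) :
    (f • ofFun g) n = ∑ k ∈ n.divisors, f k • g (n / k) := by
  rw [smul_apply, Nat.sum_divisorsAntidiagonal fun a b => f a • ofFun g b]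
  refine sum_congr rfl fun k hk => ?_
  have hnk : n / k ≠ 0 :=
    (Nat.div_pos (Nat.divisor_le hk) (Nat.pos_of_mem_divisors hk)).ne'
  rw [ofFun_apply_of_ne_zero _ hnk]

theorem moebius_pmul_ofFun_mul_ofFun [Ring R] (T : ℕ →* R) :
    pmul (μ : ArithmeticFunction R) (ofFun T) * ofFun T = 1 := by
  ext n
  rcases eq_or_ne n 0 with rfl | hn
  · simp
  have hT : ∀ x ∈ n.divisorsAntidiagonal,
      pmul (μ : ArithmeticFunction R) (ofFun T) x.1 * ofFun T x.2 = (μ x.1 : R) * T n := by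
    rintro ⟨a, b⟩ hx
    obtain ⟨rfl, hab⟩ := Nat.mem_divisorsAntidiagonal.1 hx
    rw [pmul_apply, intCoe_apply, ofFun_apply_of_ne_zero _ (left_ne_zero_of_mul hab),
      ofFun_apply_of_ne_zero _ (right_ne_zero_of_mul hab), mul_assoc, map_mul]
  have hμ : ∑ x ∈ n.divisorsAntidiagonal, (μ x.1 : R) = (1 : ArithmeticFunction R) n := by
    rw [← coe_moebius_mul_coe_zeta, coe_mul_zeta_apply,
      Nat.sum_divisorsAntidiagonal fun a _ => (μ a : R)]
    simp only [intCoe_apply]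
  rw [mul_apply, sum_congr rfl hT, ← sum_mul, hμ, one_apply]
  split_ifs with h
  · rw [h, map_one, one_mul]
  · rw [zero_mul]

theorem sum_moebius_smul_smul_eq_of_sum_smul_eq [Ring R] [AddCommGroup M] [Module R M]
    (T : ℕ →* R) {f g : ℕ → M} (hg : ∀ m > 0, ∑ k ∈ m.divisors, T k • f (m / k) = g m) {n : ℕ}
    (hn : 0 < n) :
    ∑ k ∈ n.divisors, μ k • T k • g (n / k) = f n := by
  have hconv : ofFun T • ofFun f = ofFun g := by
    ext m
    rcases eq_or_ne m 0 with rfl | hm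
    · simp
    rw [smul_ofFun_apply, ofFun_apply_of_ne_zero _ hm, ← hg m (Nat.pos_of_ne_zero hm)]
    refine sum_congr rfl fun k hk => ?_
    rw [ofFun_apply_of_ne_zero _ (Nat.pos_of_mem_divisors hk).ne']
  calc ∑ k ∈ n.divisors, μ k • T k • g (n / k)
      = (pmul (μ : ArithmeticFunction R) (ofFun T) • ofFun g) n := by
        rw [smul_ofFun_apply]
        refine sum_congr rfl fun k hk => ?_
        rw [pmul_apply, intCoe_apply, ofFun_apply_of_ne_zero _ (Nat.pos_of_mem_divisors hk).ne',
          mul_smul, Int.cast_smul_eq_zsmul]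
    _ = f n := by
        rw [← hconv, ← mul_smul', moebius_pmul_ofFun_mul_ofFun, one_smul',
          ofFun_apply_of_ne_zero _ hn.ne']

end ArithmeticFunction

section FiberSum

variable {α β γ A : Type*} [AddCommMonoid A]

def fiberSum [Fintype α] [DecidableEq β] (φ : α → β) : (α → A) →+ (β → A) where
  toFun f b := ∑ a ∈ univ.filter (fun a => φ a = b), f a
  map_zero' := by ext; simp
  map_add' f g := by ext; simp [sum_add_distrib]

theorem fiberSum_apply [Fintype α] [DecidableEq β] (φ : α → β) (f : α → A) (b : β) :
    fiberSum φ f b = ∑ a ∈ univ.filter (fun a => φ a = b), f a :=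
  rfl

theorem fiberSum_comp [Fintype α] [Fintype β] [DecidableEq β] [DecidableEq γ]
    (ψ : β → γ) (φ : α → β) (f : α → A) :
    fiberSum (ψ ∘ φ) f = fiberSum ψ (fiberSum φ f) := by
  ext c
  simp only [fiberSum_apply, Function.comp_apply]
  rw [sum_fiberwise_eq_sum_filter]
  simp only [mem_filter, mem_univ, true_and]

theorem fiberSum_id [Fintype α] [DecidableEq α] (f : α → A) : fiberSum id f = f := by
  ext a
  simp [fiberSum_apply, filter_eq']

end FiberSum

section PowFiberSum

variable (G A : Type*) [Monoid G] [Fintype G] [DecidableEq G] [AddCommMonoid A]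

def powFiberSum : ℕ →* AddMonoid.End (G → A) where
  toFun k := fiberSum (· ^ k)
  map_one' := by
    ext f : 1
    simp_rw [pow_one]
    exact fiberSum_id f
  map_mul' j k := by
    ext f : 1
    have hpow : (fun x : G => x ^ (j * k)) = (· ^ j) ∘ (· ^ k) := funext fun x => pow_mul' x j k
    change fiberSum _ f = fiberSum _ (fiberSum _ f)
    rw [hpow, fiberSum_comp]

theorem powFiberSum_apply (k : ℕ) (f : G → A) : powFiberSum G A k f = fiberSum (· ^ k) f :=
  rfl

end PowFiberSum

theorem moebius_inversion_group_counts
    (G : Type*) [CommGroup G] [Fintype G] [DecidableEq G]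
    (I N : ℕ → G → ℂ)
    (hN : ∀ m : ℕ, 1 ≤ m → ∀ ε' : G,
      N m ε' = ∑ k ∈ m.divisors, ((m / k : ℕ) : ℂ) *
        ∑ ε ∈ Finset.univ.filter (fun ε : G => ε ^ k = ε'), I (m / k) ε) :
    ∀ d : ℕ, 1 ≤ d → ∀ ε : G,
      I d ε = (1 / (d : ℂ)) * ∑ k ∈ d.divisors,
        ((ArithmeticFunction.moebius k : ℤ) : ℂ) *
          ∑ ε₁ ∈ Finset.univ.filter (fun ε₁ : G => ε₁ ^ k = ε), N (d / k) ε₁ := by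
  intro d hd ε
  have hN' : ∀ m > 0, ∑ k ∈ m.divisors,
      powFiberSum G ℂ k • (fun ε => ((m / k : ℕ) : ℂ) * I (m / k) ε) = N m := by
    intro m hm
    ext ε'
    simp only [hN m hm, Finset.sum_apply, AddMonoid.End.smul_def, powFiberSum_apply,
      fiberSum_apply, mul_sum]
  have hinv := congrFun (ArithmeticFunction.sum_moebius_smul_smul_eq_of_sum_smul_eq
    (powFiberSum G ℂ) (f := fun m ε => (m : ℂ) * I m ε) hN' hd) ε
  simp only [AddMonoid.End.smul_def, powFiberSum_apply, zsmul_eq_mul, Finset.sum_apply,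
    Pi.mul_apply, Pi.intCast_apply, fiberSum_apply] at hinv
  rw [hinv, one_div, inv_mul_cancel_left₀ (Nat.cast_ne_zero.2 (Nat.one_le_iff_ne_zero.1 hd))]
end

section
/- Let F be a finite field with q elements and K a field extension of F of degree n. For α ∈ K define Q_α := Π_{j=0}^{n−1} (x − α^{q^j}), a monic polynomial of degree n whose coefficients lie in F. Then for every monic polynomial h ∈ F[x] of degree ℓ: Σ_{k | n} (n/k) · #{f ∈ F[x] : f monic irreducible, deg f = n/k, and f^k is type-II equivalent to h} = #{α ∈ K : Q_α is type-II equivalent to h}. -/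
/-!
The Frobenius `x ↦ x ^ q` generates `Gal(K/F)`, so `Q_α = ∏_σ (X - σ α)`. This polynomial has
coefficients in `F` and all its roots are conjugates of `α`, hence it is a power of the minimal
polynomial `m_α` of `α`, namely `Q_α = m_α ^ (n / deg m_α)`. Sorting the elements of `K` by their
minimal polynomial and using that a monic irreducible `f` with `deg f ∣ n` is the minimal
polynomial of exactly `deg f` elements of `K`, both sides count `∑ deg f` over those `f` for
which `f ^ (n / deg f)` is type-II equivalent to `h`.
-/

open Polynomial

/-- Two monic polynomials are type-II equivalent if their reversals agree
modulo `X^(ℓ+1)`. -/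
def TypeIIEquiv {R : Type*} [CommRing R] (ℓ : ℕ) (f g : Polynomial R) : Prop :=
  (X ^ (ℓ + 1) : Polynomial R) ∣ (f.reverse - g.reverse)

theorem typeIIEquiv_map_iff {R S : Type*} [CommRing R] [CommRing S] {φ : R →+* S}
    (hφ : Function.Injective φ) {ℓ : ℕ} {f g : R[X]} :
    TypeIIEquiv ℓ (f.map φ) (g.map φ) ↔ TypeIIEquiv ℓ f g := by
  have hrev (p : R[X]) : (p.map φ).reverse = p.reverse.map φ := by
    rw [reverse, reverse, natDegree_map_eq_of_injective hφ, reflect_map]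
  unfold TypeIIEquiv
  rw [hrev, hrev, ← Polynomial.map_sub, ← map_X φ, ← Polynomial.map_pow,
    map_dvd_map φ hφ (monic_X.pow _)]

theorem Polynomial.exists_eq_pow_of_forall_minpoly_eq {K L : Type*} [Field K] [Field L]
    [Algebra K L] {P f : K[X]} (hP : P.Monic) (hsplit : (P.map (algebraMap K L)).Splits)
    (hroots : ∀ y : L, aeval y P = 0 → minpoly K y = f) : ∃ k, P = f ^ k := by
  induction hd : P.natDegree using Nat.strong_induction_on generalizing P with
  | _ d ih =>
  rcases Nat.eq_zero_or_pos d with rfl | hpos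
  · exact ⟨0, by rw [pow_zero, ← hP.natDegree_eq_zero, hd]⟩
  obtain ⟨y, hy⟩ := hsplit.exists_eval_eq_zero <| by
    rw [degree_map, degree_eq_natDegree hP.ne_zero, hd]; exact_mod_cast hpos.ne'
  rw [eval_map_algebraMap] at hy
  have hfy := hroots y hy
  have hf : f.Monic := hfy ▸ minpoly.monic ⟨P, hP, hy⟩
  obtain ⟨Q, rfl⟩ : f ∣ P := hfy ▸ minpoly.dvd K y hy
  have hQ : Q.Monic := hf.of_mul_monic_left hP
  have hdeg : Q.natDegree < d := by
    rw [← hd, hf.natDegree_mul hQ, lt_add_iff_pos_left, ← hfy]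
    exact minpoly.natDegree_pos ⟨_, hP, hy⟩
  obtain ⟨k, rfl⟩ := ih _ hdeg hQ
    (hsplit.of_dvd (hP.map _).ne_zero (Polynomial.map_dvd _ (dvd_mul_left Q f)))
    (fun z hz => hroots z (by rw [map_mul, hz, mul_zero])) rfl
  exact ⟨k + 1, (pow_succ' f k).symm⟩

open MulSemiringAction in
theorem prod_algEquiv_X_sub_C_eq_map_minpoly_pow {K L : Type*} [Field K] [Field L] [Algebra K L]
    [FiniteDimensional K L] [IsGalois K L] (x : L) :
    ∏ σ : Gal(L/K), (X - C (σ x)) =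
      ((minpoly K x) ^ (Module.finrank K L / (minpoly K x).natDegree)).map (algebraMap K L) := by
  obtain ⟨P, hPmap, hPdeg, hPmonic⟩ := lifts_and_natDegree_eq_and_monic
    (Algebra.IsInvariant.charpoly_mem_lifts K L Gal(L/K) x) (monic_charpoly Gal(L/K) x)
  have hroots (y : L) (hy : aeval y P = 0) : minpoly K y = minpoly K x := by
    rw [← eval_map_algebraMap, hPmap, charpoly_eq, eval_prod, Finset.prod_eq_zero_iff] at hy
    obtain ⟨σ, -, hσ⟩ := hy
    rw [eval_sub, eval_X, eval_C, sub_eq_zero] at hσ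
    rw [hσ, AlgEquiv.smul_def, minpoly.algEquiv_eq]
  obtain ⟨k, rfl⟩ := exists_eq_pow_of_forall_minpoly_eq hPmonic
    (hPmap ▸ splits_charpoly Gal(L/K) x) hroots
  have hk : k * (minpoly K x).natDegree = Module.finrank K L := by
    rw [← natDegree_pow, hPdeg, charpoly_eq,
      natDegree_prod_of_monic _ _ fun _ _ => monic_X_sub_C _]
    simp [← IsGalois.card_aut_eq_finrank, Nat.card_eq_fintype_card]
  rw [← hk, Nat.mul_div_cancel _ (minpoly.natDegree_pos (IsIntegral.of_finite K x)), hPmap]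
  rfl

namespace FiniteField

variable {F K : Type*} [Field F] [Field K] [Algebra F K] [Finite K]

theorem prod_range_X_sub_C_pow_eq_map_minpoly_pow [Fintype F] (α : K) :
    ∏ j ∈ Finset.range (Module.finrank F K), (X - C (α ^ Fintype.card F ^ j)) =
      ((minpoly F α) ^ (Module.finrank F K / (minpoly F α).natDegree)).map (algebraMap F K) := by
  rw [← prod_algEquiv_X_sub_C_eq_map_minpoly_pow,
    ← (bijective_frobeniusAlgEquivOfAlgebraic_pow F K).prod_comp, ← Fin.prod_univ_eq_prod_range]
  simp only [AlgEquiv.coe_pow, coe_frobeniusAlgEquivOfAlgebraic_iterate]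

theorem ncard_setOf_minpoly_eq {f : F[X]} (hmonic : f.Monic) (hirr : Irreducible f)
    (hdvd : f.natDegree ∣ Module.finrank F K) :
    {α : K | minpoly F α = f}.ncard = f.natDegree := by
  have hroots : {α : K | minpoly F α = f} = {α | α ∈ f.aroots K} := by
    ext α
    simp only [Set.mem_ofPred_eq, mem_aroots, hmonic.ne_zero, ne_eq, not_false_eq_true, true_and]
    exact ⟨fun h => h ▸ minpoly.aeval F α,
      fun h => (minpoly.eq_of_irreducible_of_monic hirr h hmonic).symm⟩
  have : Fact (Irreducible f) := ⟨hirr⟩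
  have hrank : Module.finrank F (AdjoinRoot f) = f.natDegree := finrank_quotient_span_eq_natDegree
  rw [hroots, ← Nat.card_coe_set_eq, Set.coe_ofPred,
    ← Nat.card_congr (AdjoinRoot.equiv K F f hmonic.ne_zero),
    natCard_algHom_of_finrank_dvd (hrank ▸ hdvd), hrank]

theorem mem_range_minpoly_iff {f : F[X]} :
    f ∈ Set.range (minpoly F : K → F[X]) ↔
      f.Monic ∧ Irreducible f ∧ f.natDegree ∣ Module.finrank F K := by
  constructor
  · rintro ⟨α, rfl⟩
    have hα := IsIntegral.of_finite F α
    exact ⟨minpoly.monic hα, minpoly.irreducible hα, minpoly.degree_dvd hα⟩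
  · rintro ⟨hmonic, hirr, hdvd⟩
    obtain ⟨α, hα⟩ := Set.nonempty_of_ncard_ne_zero <| by
      rw [ncard_setOf_minpoly_eq hmonic hirr hdvd]; exact hirr.natDegree_pos.ne'
    exact ⟨α, hα⟩

theorem sum_divisors_mul_ncard_irreducible_eq (p : F[X] → Prop) :
    ∑ k ∈ (Module.finrank F K).divisors, (Module.finrank F K / k) *
      {f : F[X] | f.Monic ∧ Irreducible f ∧ f.natDegree = Module.finrank F K / k ∧ p f}.ncard =
      {α : K | p (minpoly F α)}.ncard := by
  classical
  have := Fintype.ofFinite K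
  set n := Module.finrank F K
  set M : Finset F[X] := {f ∈ Finset.univ.image (minpoly F : K → F[X]) | p f}
  have hM (f : F[X]) : f ∈ M ↔ (f.Monic ∧ Irreducible f ∧ f.natDegree ∣ n) ∧ p f := by
    rw [Finset.mem_filter, ← mem_range_minpoly_iff]
    simp [Set.mem_range]
  have hdeg {f : F[X]} (hf : f ∈ M) : f.natDegree ∈ n.divisors :=
    Nat.mem_divisors.mpr ⟨((hM f).mp hf).1.2.2, Module.finrank_pos.ne'⟩
  have hlhs (d : ℕ) (hd : d ∈ n.divisors) :
      {f : F[X] | f.Monic ∧ Irreducible f ∧ f.natDegree = d ∧ p f} =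
        ↑{f ∈ M | f.natDegree = d} := by
    ext f
    simp only [Set.mem_ofPred_eq, Finset.coe_filter, hM]
    have := (Nat.mem_divisors.mp hd).1
    constructor
    · rintro ⟨hm, hi, rfl, hp⟩; exact ⟨⟨⟨hm, hi, this⟩, hp⟩, rfl⟩
    · rintro ⟨⟨⟨hm, hi, -⟩, hp⟩, rfl⟩; exact ⟨hm, hi, rfl, hp⟩
  have hrhs : {α : K | p (minpoly F α)} = ↑({α | minpoly F α ∈ M} : Finset K) := by
    ext α; simp [M]
  calc ∑ k ∈ n.divisors, (n / k) *
        {f : F[X] | f.Monic ∧ Irreducible f ∧ f.natDegree = n / k ∧ p f}.ncard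
      = ∑ d ∈ n.divisors, d *
          {f : F[X] | f.Monic ∧ Irreducible f ∧ f.natDegree = d ∧ p f}.ncard :=
        Nat.sum_div_divisors n fun d =>
          d * {f : F[X] | f.Monic ∧ Irreducible f ∧ f.natDegree = d ∧ p f}.ncard
    _ = ∑ d ∈ n.divisors, ∑ f ∈ M with f.natDegree = d, f.natDegree := by
        refine Finset.sum_congr rfl fun d hd => ?_
        rw [hlhs d hd, Set.ncard_coe_finset,
          Finset.sum_congr rfl fun f hf => (Finset.mem_filter.mp hf).2, Finset.sum_const,
          smul_eq_mul, mul_comm]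
    _ = ∑ f ∈ M, f.natDegree := Finset.sum_fiberwise_of_maps_to (fun f hf => hdeg hf) _
    _ = ∑ f ∈ M, {α : K | minpoly F α = f}.ncard := by
        refine Finset.sum_congr rfl fun f hf => ?_
        obtain ⟨⟨hm, hi, hdvd⟩, -⟩ := (hM f).mp hf
        rw [ncard_setOf_minpoly_eq hm hi hdvd]
    _ = {α : K | p (minpoly F α)}.ncard := by
        rw [hrhs, Set.ncard_coe_finset,
          Finset.card_eq_sum_card_fiberwise (f := minpoly F) (t := M) fun α hα => by simpa using hα]
        refine Finset.sum_congr rfl fun f hf => ?_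
        rw [Finset.filter_filter, ← Set.ncard_coe_finset]
        congr 1
        ext α
        simp only [Set.mem_ofPred_eq, Finset.coe_filter, Finset.mem_univ, true_and]
        exact ⟨fun h => ⟨h ▸ hf, h⟩, And.right⟩

end FiniteField

theorem typeII_irreducible_count_eq_char_poly_count_general
    (F : Type*) [Field F] [Fintype F] (q : ℕ) (hq : Fintype.card F = q)
    (K : Type*) [Field K] [Algebra F K] [FiniteDimensional F K]
    (n : ℕ) (hn : Module.finrank F K = n)
    (ℓ : ℕ)
    (h : Polynomial F) :
    ∑ k ∈ n.divisors, (n / k) *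
      {f : Polynomial F | f.Monic ∧ Irreducible f ∧ f.natDegree = n / k ∧
        TypeIIEquiv ℓ (f ^ k) h}.ncard
    = {α : K |
        TypeIIEquiv ℓ (∏ j ∈ Finset.range n, (X - C (α ^ q ^ j)))
          (h.map (algebraMap F K))}.ncard := by
  subst hq hn
  have : Finite K := Module.finite_of_finite F
  simp_rw [FiniteField.prod_range_X_sub_C_pow_eq_map_minpoly_pow,
    typeIIEquiv_map_iff (algebraMap F K).injective]
  rw [← FiniteField.sum_divisors_mul_ncard_irreducible_eq
    fun f => TypeIIEquiv ℓ (f ^ (Module.finrank F K / f.natDegree)) h]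
  refine Finset.sum_congr rfl fun k hk => ?_
  have hkn : Module.finrank F K / (Module.finrank F K / k) = k :=
    Nat.div_div_self (Nat.mem_divisors.mp hk).1 Module.finrank_pos.ne'
  congr 2
  ext f
  exact ⟨fun ⟨hm, hi, hd, hT⟩ => ⟨hm, hi, hd, by rwa [hd, hkn]⟩,
    fun ⟨hm, hi, hd, hT⟩ => ⟨hm, hi, hd, by rwa [hd, hkn] at hT⟩⟩

theorem typeII_irreducible_count_eq_char_poly_count
    (F : Type*) [Field F] [Fintype F] (q : ℕ) (hq : Fintype.card F = q)
    (K : Type*) [Field K] [Algebra F K] [FiniteDimensional F K]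
    (n : ℕ) (hn : Module.finrank F K = n) (hn1 : 1 ≤ n)
    (ℓ : ℕ) (hℓ : 1 ≤ ℓ)
    (h : Polynomial F) (hmonic : h.Monic) (hdeg : h.natDegree = ℓ) :
    ∑ k ∈ n.divisors, (n / k) *
      {f : Polynomial F | f.Monic ∧ Irreducible f ∧ f.natDegree = n / k ∧
        TypeIIEquiv ℓ (f ^ k) h}.ncard
    = {α : K |
        TypeIIEquiv ℓ (∏ j ∈ Finset.range n, (X - C (α ^ q ^ j)))
          (h.map (algebraMap F K))}.ncard :=
  typeII_irreducible_count_eq_char_poly_count_general F q hq K n hn ℓ h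
end

section
/- Let F be a finite field with q elements and K a field extension of F of degree n. For α ∈ K define Q_α := Π_{j=0}^{n−1} (x − α^{q^j}), a monic polynomial of degree n whose coefficients lie in F. Then for every monic polynomial h ∈ F[x] of degree ℓ+t with h(0) ≠ 0: Σ_{k | n} (n/k) · #{f ∈ F[x] : f monic irreducible, deg f = n/k, f(0) ≠ 0, and f^k is type-I equivalent to h} = #{α ∈ K : α ≠ 0 and Q_α is type-I equivalent to h}. -/
/-!
The Frobenius orbit `α, α^q, α^(q^2), …` of `α ∈ K` has exact period `d = deg (minpoly F α)` and
its first `d` terms are the roots of `minpoly F α`; hence `Q_α = (minpoly F α)^(n/d)`, and since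
type-I equivalence is unchanged by extending scalars, the condition on `α` only depends on its
minimal polynomial. Every monic irreducible `f` of degree `d ∣ n` is the minimal polynomial of
exactly `d` elements of `K` (it splits in `K` and is separable), so counting `α` by minimal
polynomial gives the weighted sum on the left.
-/

open Polynomial

open Finset

theorem Polynomial.reverse_map_of_injective {R S : Type*} [Semiring R] [Semiring S] {φ : R →+* S}
    (hφ : Function.Injective φ) (p : R[X]) : (p.map φ).reverse = p.reverse.map φ := by
  rw [reverse, reverse, natDegree_map_eq_of_injective hφ, reflect_map]

theorem Polynomial.X_pow_dvd_map_iff {R S : Type*} [CommRing R] [CommRing S] {φ : R →+* S}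
    (hφ : Function.Injective φ) (m : ℕ) (p : R[X]) : (X ^ m : S[X]) ∣ p.map φ ↔ X ^ m ∣ p := by
  simpa using map_dvd_map φ hφ (monic_X_pow m) (y := p)

theorem TypeIEquiv.map_iff {R S : Type*} [CommRing R] [CommRing S] {φ : R →+* S}
    (hφ : Function.Injective φ) (ℓ t : ℕ) (f g : R[X]) :
    TypeIEquiv ℓ t (f.map φ) (g.map φ) ↔ TypeIEquiv ℓ t f g := by
  simp only [TypeIEquiv, reverse_map_of_injective hφ, ← Polynomial.map_sub, X_pow_dvd_map_iff hφ]

theorem Function.Periodic.prod_range_mul_eq_pow {M : Type*} [CommMonoid M] {f : ℕ → M} {d : ℕ}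
    (hf : Function.Periodic f d) (m : ℕ) :
    ∏ j ∈ range (d * m), f j = (∏ j ∈ range d, f j) ^ m := by
  induction m with
  | zero => simp
  | succ m ih =>
    rw [Nat.mul_succ, prod_range_add, ih, pow_succ]
    congr 1
    refine prod_congr rfl fun j _ ↦ ?_
    rw [add_comm, mul_comm]
    exact hf.nat_mul m j

section MinimalPolynomial

variable {F K : Type*} [Field F] [Field K] [Algebra F K]

theorem setOf_minpoly_eq_rootSet {f : F[X]} (hmonic : f.Monic) (hf : Irreducible f) :
    {α : K | minpoly F α = f} = f.rootSet K := by
  ext α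
  rw [Set.mem_ofPred_eq, mem_rootSet, and_iff_right hf.ne_zero]
  exact ⟨fun h ↦ h ▸ minpoly.aeval F α,
    fun h ↦ (minpoly.eq_of_irreducible_of_monic hf h hmonic).symm⟩

variable [Fintype F]

theorem aeval_pow_card_pow (f : F[X]) (β : K) (j : ℕ) :
    aeval (β ^ Fintype.card F ^ j) f = aeval β f ^ Fintype.card F ^ j := by
  have hfrob (x : K) : (FiniteField.frobeniusAlgHom F K ^ j) x = x ^ Fintype.card F ^ j := by
    rw [AlgHom.coe_pow, FiniteField.coe_frobeniusAlgHom, pow_iterate]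
  rw [← hfrob, aeval_algHom_apply, hfrob]

variable [FiniteDimensional F K]

theorem pow_card_pow_eq_self_iff_natDegree_minpoly_dvd (α : K) (e : ℕ) :
    α ^ Fintype.card F ^ e = α ↔ (minpoly F α).natDegree ∣ e := by
  rw [(minpoly.irreducible (IsIntegral.of_finite F α)).natDegree_dvd_iff_dvd_X_pow_card_pow_sub_X,
    Nat.card_eq_fintype_card, minpoly.dvd_iff]
  simp [sub_eq_zero]

theorem minimalPeriod_pow_card_eq_natDegree_minpoly (α : K) :
    Function.minimalPeriod (· ^ Fintype.card F) α = (minpoly F α).natDegree := by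
  have h (e : ℕ) :
      Function.IsPeriodicPt (· ^ Fintype.card F) e α ↔ (minpoly F α).natDegree ∣ e := by
    rw [Function.IsPeriodicPt, Function.IsFixedPt, pow_iterate,
      pow_card_pow_eq_self_iff_natDegree_minpoly_dvd]
  exact Nat.dvd_antisymm (Function.IsPeriodicPt.minimalPeriod_dvd ((h _).mpr dvd_rfl))
    ((h _).mp (Function.isPeriodicPt_minimalPeriod _ _))

theorem injOn_pow_card_pow_Iio_natDegree_minpoly (α : K) :
    Set.InjOn (fun j ↦ α ^ Fintype.card F ^ j) (Set.Iio (minpoly F α).natDegree) := by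
  simpa [pow_iterate, minimalPeriod_pow_card_eq_natDegree_minpoly] using
    Function.iterate_injOn_Iio_minimalPeriod (f := (· ^ Fintype.card F)) (x := α)

theorem prod_range_natDegree_minpoly_X_sub_C_pow_card_pow (α : K) :
    ∏ j ∈ range (minpoly F α).natDegree, (X - C (α ^ Fintype.card F ^ j)) =
      (minpoly F α).map (algebraMap F K) := by
  classical
  set d := (minpoly F α).natDegree
  set orbit := (range d).image fun j ↦ α ^ Fintype.card F ^ j
  have hinj : Set.InjOn (fun j ↦ α ^ Fintype.card F ^ j) (range d) := by
    simpa using injOn_pow_card_pow_Iio_natDegree_minpoly α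
  have hmonic : ((minpoly F α).map (algebraMap F K)).Monic :=
    (minpoly.monic (IsIntegral.of_finite F α)).map _
  rw [← prod_image (f := fun a ↦ X - C a) hinj]
  -- `d` distinct roots of a monic polynomial of degree `d`
  refine (eq_of_monic_of_dvd_of_natDegree_le
    (monic_prod_of_monic _ _ fun a _ ↦ monic_X_sub_C a) hmonic ?_ ?_).symm
  · rw [prod_eq_multiset_prod, Multiset.prod_X_sub_C_dvd_iff_le_roots hmonic.ne_zero,
      Multiset.le_iff_subset orbit.nodup]
    intro a ha
    obtain ⟨j, -, rfl⟩ := mem_image.mp (mem_val.mp ha)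
    rw [mem_roots hmonic.ne_zero, IsRoot, eval_map_algebraMap, aeval_pow_card_pow, minpoly.aeval,
      zero_pow (by positivity)]
  · rw [natDegree_prod_of_monic _ _ fun a _ ↦ monic_X_sub_C a, natDegree_map]
    simp [card_image_of_injOn hinj, d]

theorem prod_range_finrank_X_sub_C_pow_card_pow (α : K) :
    ∏ j ∈ range (Module.finrank F K), (X - C (α ^ Fintype.card F ^ j)) =
      (minpoly F α ^ (Module.finrank F K / (minpoly F α).natDegree)).map (algebraMap F K) := by
  have hα := IsIntegral.of_finite F α
  obtain ⟨m, hm⟩ := minpoly.degree_dvd hα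
  have hperiodic : Function.Periodic (fun j ↦ X - C (α ^ Fintype.card F ^ j))
      (minpoly F α).natDegree := fun j ↦ by
    dsimp only
    rw [pow_add, mul_comm, pow_mul,
      (pow_card_pow_eq_self_iff_natDegree_minpoly_dvd α _).mpr dvd_rfl]
  rw [hm, Nat.mul_div_cancel_left _ (minpoly.natDegree_pos hα), Polynomial.map_pow,
    hperiodic.prod_range_mul_eq_pow, prod_range_natDegree_minpoly_X_sub_C_pow_card_pow]

theorem splits_map_of_natDegree_dvd_finrank {f : F[X]} (hf : Irreducible f)
    (hdvd : f.natDegree ∣ Module.finrank F K) : Splits (f.map (algebraMap F K)) := by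
  have : Finite K := Module.finite_of_finite F
  -- `f ∣ X ^ q ^ n - X = X ^ #K - X`, which splits in `K`
  have hsub : (X ^ Nat.card F ^ Module.finrank F K - X : F[X]) ≠ 0 :=
    FiniteField.X_pow_card_pow_sub_X_ne_zero F Module.finrank_pos.ne' Finite.one_lt_card
  refine Splits.of_dvd ?_ (Polynomial.map_ne_zero hsub)
    (Polynomial.map_dvd _ (hf.natDegree_dvd_iff_dvd_X_pow_card_pow_sub_X.mp hdvd))
  have hsplits := Polynomial.splits_X_pow_nat_card_sub_X (K := K)
  rw [Module.natCard_eq_pow_finrank (K := F)] at hsplits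
  simpa using hsplits

theorem ncard_rootSet_eq_natDegree {f : F[X]} (hf : Irreducible f)
    (hdvd : f.natDegree ∣ Module.finrank F K) : (f.rootSet K).ncard = f.natDegree := by
  rw [← Nat.card_coe_set_eq, Nat.card_eq_fintype_card,
    card_rootSet_eq_natDegree (PerfectField.separable_of_irreducible hf)
      (splits_map_of_natDegree_dvd_finrank hf hdvd)]

theorem mem_range_minpoly_iff (f : F[X]) :
    f ∈ Set.range (minpoly F : K → F[X]) ↔
      f.Monic ∧ Irreducible f ∧ f.natDegree ∣ Module.finrank F K := by
  constructor
  · rintro ⟨α, rfl⟩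
    have hα := IsIntegral.of_finite F α
    exact ⟨minpoly.monic hα, minpoly.irreducible hα, minpoly.degree_dvd hα⟩
  · rintro ⟨hmonic, hf, hdvd⟩
    have hroots : (f.rootSet K).ncard ≠ 0 := by
      rw [ncard_rootSet_eq_natDegree hf hdvd]
      exact hf.natDegree_pos.ne'
    rw [← setOf_minpoly_eq_rootSet hmonic hf] at hroots
    exact Set.nonempty_of_ncard_ne_zero hroots

theorem ncard_setOf_minpoly_eq_sum_divisors (P : F[X] → Prop) :
    {α : K | P (minpoly F α)}.ncard = ∑ d ∈ (Module.finrank F K).divisors,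
      d * {f : F[X] | f.Monic ∧ Irreducible f ∧ f.natDegree = d ∧ P f}.ncard := by
  classical
  have : Finite K := Module.finite_of_finite F
  have : Fintype K := Fintype.ofFinite K
  set n := Module.finrank F K
  set T : Finset F[X] := {f ∈ (univ : Finset K).image (minpoly F) | P f}
  have hT (f : F[X]) : f ∈ T ↔ (f.Monic ∧ Irreducible f ∧ f.natDegree ∣ n) ∧ P f := by
    rw [← mem_range_minpoly_iff (K := K)]
    simp [T, Set.mem_range]
  have hfiber (f : F[X]) (hf : f ∈ T) : #{α : K | minpoly F α = f} = f.natDegree := by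
    obtain ⟨⟨hmonic, hirr, hdvd⟩, -⟩ := (hT f).mp hf
    rw [← ncard_rootSet_eq_natDegree (K := K) hirr hdvd, ← setOf_minpoly_eq_rootSet hmonic hirr,
      ← Set.ncard_coe_finset]
    simp
  have hdeg : (T : Set F[X]).MapsTo natDegree n.divisors := fun f hf ↦
    Nat.mem_divisors.mpr ⟨((hT f).mp hf).1.2.2, Module.finrank_pos.ne'⟩
  calc {α : K | P (minpoly F α)}.ncard
      = #{α : K | P (minpoly F α)} := by rw [← Set.ncard_coe_finset, coe_filter_univ]
    _ = ∑ f ∈ T, #{α | minpoly F α = f} := by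
        rw [card_eq_sum_card_fiberwise (f := minpoly F) (t := T) fun α hα ↦ by simpa [T] using hα]
        refine sum_congr rfl fun f hf ↦ ?_
        rw [filter_filter]
        refine congrArg card (filter_congr fun α _ ↦ and_iff_right_of_imp ?_)
        rintro rfl
        exact ((hT _).mp hf).2
    _ = ∑ f ∈ T, f.natDegree := sum_congr rfl hfiber
    _ = ∑ d ∈ n.divisors, ∑ f ∈ T with f.natDegree = d, d := by
        rw [← sum_fiberwise_of_maps_to hdeg]
        exact sum_congr rfl fun d _ ↦ sum_congr rfl fun f hf ↦
          (mem_filter.mp hf).2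
    _ = _ := by
        refine sum_congr rfl fun d hd ↦ ?_
        rw [sum_const, smul_eq_mul, mul_comm, ← Set.ncard_coe_finset]
        congr 2
        ext f
        simp only [coe_filter, hT, Set.mem_ofPred_eq]
        have hdvd := Nat.dvd_of_mem_divisors hd
        grind

end MinimalPolynomial

theorem typeI_irreducible_count_eq_char_poly_count_general
    (F : Type*) [Field F] [Fintype F] (q : ℕ) (hq : Fintype.card F = q)
    (K : Type*) [Field K] [Algebra F K] [FiniteDimensional F K]
    (n : ℕ) (hn : Module.finrank F K = n)
    (ℓ t : ℕ)
    (h : Polynomial F) :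
    ∑ k ∈ n.divisors, (n / k) *
      {f : Polynomial F | f.Monic ∧ Irreducible f ∧ f.natDegree = n / k ∧
        f.eval 0 ≠ 0 ∧ TypeIEquiv ℓ t (f ^ k) h}.ncard
    = {α : K | α ≠ 0 ∧
        TypeIEquiv ℓ t (∏ j ∈ Finset.range n, (X - C (α ^ q ^ j)))
          (h.map (algebraMap F K))}.ncard := by
  subst hq hn
  have hα (α : K) : α ≠ 0 ↔ (minpoly F α).eval 0 ≠ 0 := by
    rw [← coeff_zero_eq_eval_zero]
    exact (minpoly.coeff_zero_eq_zero (IsIntegral.of_finite F α)).not.symm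
  simp_rw [hα, prod_range_finrank_X_sub_C_pow_card_pow,
    TypeIEquiv.map_iff (algebraMap F K).injective]
  rw [ncard_setOf_minpoly_eq_sum_divisors (fun f ↦ f.eval 0 ≠ 0 ∧
    TypeIEquiv ℓ t (f ^ (Module.finrank F K / f.natDegree)) h), ← Nat.sum_div_divisors]
  refine sum_congr rfl fun k hk ↦ ?_
  have hnk := Nat.div_div_self (Nat.dvd_of_mem_divisors hk) Module.finrank_pos.ne'
  congr 2
  ext f
  simp only [Set.mem_ofPred_eq]
  grind

theorem typeI_irreducible_count_eq_char_poly_count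
    (F : Type*) [Field F] [Fintype F] (q : ℕ) (hq : Fintype.card F = q)
    (K : Type*) [Field K] [Algebra F K] [FiniteDimensional F K]
    (n : ℕ) (hn : Module.finrank F K = n) (hn1 : 1 ≤ n)
    (ℓ t : ℕ) (hℓ : 1 ≤ ℓ) (ht : 1 ≤ t)
    (h : Polynomial F) (hmonic : h.Monic) (hdeg : h.natDegree = ℓ + t)
    (h0 : h.eval 0 ≠ 0) :
    ∑ k ∈ n.divisors, (n / k) *
      {f : Polynomial F | f.Monic ∧ Irreducible f ∧ f.natDegree = n / k ∧
        f.eval 0 ≠ 0 ∧ TypeIEquiv ℓ t (f ^ k) h}.ncard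
    = {α : K | α ≠ 0 ∧
        TypeIEquiv ℓ t (∏ j ∈ Finset.range n, (X - C (α ^ q ^ j)))
          (h.map (algebraMap F K))}.ncard :=
  typeI_irreducible_count_eq_char_poly_count_general F q hq K n hn ℓ t h
end

section
/- Let p be a prime, ℓ ≥ 1 an integer, and j an integer with 1 ≤ j ≤ ℓ and p ∤ j. Let s_j be the smallest positive integer such that j·p^{s_j} > ℓ. Then the least positive integer n such that (x^j + 1)^n ∈ 𝔽_p[x] is type-II equivalent to the constant polynomial 1 (i.e., the reversal of (x^j+1)^n is congruent to 1 modulo x^{ℓ+1}) equals p^{s_j}. In other words, the type-II equivalence class of x^j + 1 has order p^{s_j}. -/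
open Polynomial

lemma rev_aux (R : Type*) [CommRing R] [Nontrivial R] (j : ℕ) :
    (X ^ j + 1 : R[X]).reverse = X ^ j + 1 := by
  rw [← C_1, reverse_add_C]
  have : reverse (X ^ j : R[X]) = 1 := by
    rw [← mul_one (X ^ j : R[X]), reverse_X_pow_mul, ← C_1, reverse_C]
  rw [this, natDegree_X_pow, C_1, one_mul, add_comm]

lemma coeff_aux (R : Type*) [CommRing R] (a m : ℕ) (ha : 0 < a) :
    (((X : R[X]) ^ a + 1) ^ m).coeff a = m := by
  rw [add_pow, finset_sum_coeff, Finset.sum_eq_single 1]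
  · rw [pow_one, one_pow, mul_one, Nat.choose_one_right, ← C_eq_natCast, mul_comm,
      coeff_C_mul, coeff_X_pow, if_pos rfl, mul_one]
  · intro k hk hk1
    simp only [one_pow, mul_one, ← pow_mul, ← C_eq_natCast]
    have h2 : a * k ≠ a := by
      rcases Nat.lt_or_ge k 1 with h | h
      · interval_cases k; omega
      · have : k ≥ 2 := by omega
        nlinarith
    rw [mul_comm, coeff_C_mul, coeff_X_pow, if_neg (Ne.symm h2), mul_zero]
  · intro h
    simp only [Finset.mem_range, not_lt] at h
    have : m = 0 := by omega
    subst this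
    simp

theorem order_of_x_pow_j_add_one
    (p : ℕ) [Fact p.Prime] (ℓ : ℕ) (hℓ : 1 ≤ ℓ)
    (j : ℕ) (hj1 : 1 ≤ j) (hjℓ : j ≤ ℓ) (hpj : ¬ p ∣ j)
    (s : ℕ) (hs : 0 < s) (hgt : ℓ < j * p ^ s)
    (hmin : ∀ s' : ℕ, 0 < s' → ℓ < j * p ^ s' → s ≤ s') :
    IsLeast {n : ℕ | 0 < n ∧
      TypeIIEquiv ℓ (((X : Polynomial (ZMod p)) ^ j + 1) ^ n) 1} (p ^ s) := by
  have hp : p.Prime := Fact.out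
  haveI : NeZero p := ⟨hp.ne_zero⟩
  have hrev : ∀ n : ℕ, (((X : Polynomial (ZMod p)) ^ j + 1) ^ n).reverse
      = ((X : Polynomial (ZMod p)) ^ j + 1) ^ n := by
    intro n
    induction n with
    | zero => rw [pow_zero, ← C_1, reverse_C]
    | succ n ih => rw [pow_succ, reverse_mul_of_domain, ih, rev_aux]
  have hrev1 : (1 : Polynomial (ZMod p)).reverse = 1 := by rw [← C_1, reverse_C]
  have hfrob : ∀ t : ℕ, ((X : Polynomial (ZMod p)) ^ j + 1) ^ (p ^ t)
      = X ^ (j * p ^ t) + 1 := by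
    intro t
    rw [add_pow_char_pow, one_pow, ← pow_mul]
  constructor
  · refine ⟨pow_pos hp.pos s, ?_⟩
    unfold TypeIIEquiv
    rw [hrev, hrev1, hfrob, add_sub_cancel_right]
    exact pow_dvd_pow X hgt
  · rintro n ⟨hn, hdvd⟩
    unfold TypeIIEquiv at hdvd
    rw [hrev, hrev1] at hdvd
    set t := n.factorization p with ht
    set m := n / p ^ t with hm
    have hnm : p ^ t * m = n := Nat.ordProj_mul_ordCompl_eq_self n p
    have hmpos : 0 < m := Nat.ordCompl_pos p hn.ne'
    have hpm : ¬ p ∣ m := Nat.not_dvd_ordCompl hp hn.ne'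
    have hkey : ℓ < j * p ^ t := by
      by_contra hle
      push_neg at hle
      have hlt : j * p ^ t < ℓ + 1 := by omega
      have := (X_pow_dvd_iff.mp hdvd) (j * p ^ t) hlt
      have hapos : 0 < j * p ^ t := Nat.mul_pos hj1 (pow_pos hp.pos t)
      rw [← hnm, pow_mul, hfrob, sub_eq_add_neg, coeff_add, coeff_aux _ _ _ hapos,
        coeff_neg, coeff_one] at this
      rw [if_neg hapos.ne', neg_zero, add_zero] at this
      exact hpm ((ZMod.natCast_eq_zero_iff m p).mp this)
    have htpos : 0 < t := by
      rcases Nat.eq_zero_or_pos t with h | h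
      · rw [h, pow_zero, mul_one] at hkey; omega
      · exact h
    have hst : s ≤ t := hmin t htpos hkey
    calc p ^ s ≤ p ^ t := Nat.pow_le_pow_right hp.pos hst
      _ ≤ p ^ t * m := Nat.le_mul_of_pos_right _ hmpos
      _ = n := hnm
end

section
/- Let p be a prime and ℓ ≥ 1 an integer. For each integer j with 1 ≤ j ≤ ℓ and p ∤ j, let s_j be the smallest positive integer such that j·p^{s_j} > ℓ. Then every monic polynomial f ∈ 𝔽_p[x] is type-II equivalent to the product Π_{1 ≤ j ≤ ℓ, p ∤ j} (x^j + 1)^{e_j} for exactly one tuple of exponents (e_j) with 0 ≤ e_j < p^{s_j} for each j. In other words, the type-II equivalence classes of the polynomials x^j + 1 (for 1 ≤ j ≤ ℓ with p ∤ j) generate the group of type-II equivalence classes as a direct product of cyclic groups of orders p^{s_j}. -/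
/-!
Reversal sends a monic `f` to a polynomial with constant term `1` and `x^j + 1` to `1 + x^j`, so
the question is about the units `1 + x 𝔽_p[x]` modulo `x^(ℓ+1)`. Multiplying by `(1 + x^n)^c`
(`n ≥ 1`) adds `c` to the coefficient of `x^n` and leaves the lower coefficients alone; reading off
one coefficient at a time, every such unit is `∏_{n=1}^{ℓ} (1 + x^n)^{c_n}` modulo `x^(ℓ+1)` for
exactly one digit vector `0 ≤ c_n < p`. Writing `n = j p^k` with `p ∤ j`, Frobenius gives
`1 + x^n = (1 + x^j)^{p^k}`, so the digits `c_{j p^k}` with `j p^k ≤ ℓ`, i.e. `k < s_j`, are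
precisely the base-`p` digits of an exponent `e_j < p^{s_j}`.
-/

open Polynomial

open Finset

namespace Nat

theorem sum_range_div_pow_mod_mul_pow (n b s : ℕ) :
    ∑ k ∈ range s, n / b ^ k % b * b ^ k = n % b ^ s := by
  induction s with
  | zero => simp [Nat.mod_one]
  | succ s ih => rw [sum_range_succ, ih, Nat.mod_pow_succ, mul_comm]

theorem sum_range_mul_pow_lt {b s : ℕ} {d : ℕ → ℕ} (hd : ∀ k, d k < b) :
    ∑ k ∈ range s, d k * b ^ k < b ^ s := by
  induction s with
  | zero => simp
  | succ s ih =>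
    calc ∑ k ∈ range (s + 1), d k * b ^ k < b ^ s + d s * b ^ s := by
          rw [sum_range_succ]; omega
      _ = (d s + 1) * b ^ s := by ring
      _ ≤ b ^ (s + 1) := by rw [pow_succ']; exact Nat.mul_le_mul_right _ (hd s)

theorem lt_iff_mul_pow_le {b j ℓ t : ℕ} (hb : 0 < b) (hj : j ≤ ℓ) (hlt : ℓ < j * b ^ t)
    (hmin : ∀ t', 0 < t' → ℓ < j * b ^ t' → t ≤ t') (k : ℕ) : k < t ↔ j * b ^ k ≤ ℓ := by
  constructor
  · intro hk
    by_contra! hgt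
    obtain rfl | hk0 := k.eq_zero_or_pos
    · simp at hgt; omega
    · exact absurd (hmin k hk0 hgt) (by omega)
  · intro hle
    by_contra! hk
    have := Nat.mul_le_mul_left j (Nat.pow_le_pow_right hb hk)
    omega

theorem factorization_mul_pow_of_not_dvd {p j : ℕ} (hp : p.Prime) (hj : ¬ p ∣ j) (k : ℕ) :
    (j * p ^ k).factorization p = k := by
  have hj0 : j ≠ 0 := by rintro rfl; simp at hj
  simp [Nat.factorization_mul hj0 (pow_ne_zero k hp.ne_zero), hp.factorization_pow,
    Nat.factorization_eq_zero_of_not_dvd hj]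

end Nat

theorem Polynomial.reverse_one {R : Type*} [Semiring R] : reverse (1 : R[X]) = 1 := by
  simpa using reverse_C (1 : R)

theorem reverse_X_pow_add_one {R : Type*} [Semiring R] (n : ℕ) :
    reverse ((X : R[X]) ^ n + 1) = 1 + X ^ n := by
  nontriviality R
  have hX : reverse ((X : R[X]) ^ n) = 1 := by
    simpa [reverse_one] using reverse_X_pow_mul (1 : R[X]) n
  have := reverse_add_C ((X : R[X]) ^ n) 1
  rwa [C_1, hX, one_mul, natDegree_X_pow] at this

section Reverse

variable {R : Type*} [CommSemiring R] [NoZeroDivisors R]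

noncomputable def reverseMonoidHom : R[X] →* R[X] where
  toFun := reverse
  map_one' := reverse_one
  map_mul' := reverse_mul_of_domain

theorem reverse_prod_X_pow_add_one_pow (S : Finset ℕ) (e : ℕ → ℕ) :
    reverse (∏ j ∈ S, ((X : R[X]) ^ j + 1) ^ e j) = ∏ j ∈ S, (1 + X ^ j) ^ e j := by
  change reverseMonoidHom _ = _
  simp only [map_prod, map_pow]
  exact prod_congr rfl fun j _ => congrArg (· ^ e j) (reverse_X_pow_add_one j)

end Reverse

theorem Polynomial.Monic.X_dvd_reverse_sub_one {R : Type*} [Ring R] {f : R[X]} (hf : f.Monic) :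
    X ∣ f.reverse - 1 := by
  rw [X_dvd_iff, coeff_sub, coeff_zero_reverse, hf.leadingCoeff, coeff_one_zero, sub_self]

section Congruences

variable {R : Type*} [CommRing R]

theorem X_pow_succ_dvd_mul_one_add_X_pow_pow_sub {P : R[X]} (hP : X ∣ P - 1) {m : ℕ}
    (hm : 1 ≤ m) (c : ℕ) : X ^ (m + 1) ∣ P * (1 + X ^ m) ^ c - (P + C (c : R) * X ^ m) := by
  have hsq : (X : R[X]) ^ (m + 1) ∣ (1 + X ^ m) ^ c - X ^ m * (c : R[X]) - 1 := by
    have h := sq_dvd_add_pow_sub_sub ((X : R[X]) ^ m) 1 c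
    rw [one_pow, one_pow, one_mul, ← pow_mul] at h
    exact (pow_dvd_pow X (by omega)).trans h
  have hlin : (X : R[X]) ^ (m + 1) ∣ C (c : R) * X ^ m * (P - 1) := by
    rw [pow_succ]; exact mul_dvd_mul (dvd_mul_left _ _) hP
  have : P * (1 + X ^ m) ^ c - (P + C (c : R) * X ^ m) =
      P * ((1 + X ^ m) ^ c - X ^ m * (c : R[X]) - 1) + C (c : R) * X ^ m * (P - 1) := by
    rw [map_natCast]; ring
  rw [this]
  exact dvd_add (hsq.mul_left P) hlin

theorem X_dvd_prod_one_add_X_pow_pow_sub_one (L : ℕ) (c : ℕ → ℕ) :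
    X ∣ ∏ n ∈ Icc 1 L, (1 + X ^ n : R[X]) ^ c n - 1 := by
  rw [X_dvd_iff, coeff_sub, coeff_zero_eq_eval_zero, eval_prod, coeff_one_zero, sub_eq_zero]
  exact prod_eq_one fun n hn => by simp [zero_pow (by simp at hn; omega : n ≠ 0)]

theorem X_pow_dvd_prod_Icc_succ_sub (L : ℕ) (c : ℕ → ℕ) :
    X ^ (L + 2) ∣ ∏ n ∈ Icc 1 (L + 1), (1 + X ^ n : R[X]) ^ c n -
      (∏ n ∈ Icc 1 L, (1 + X ^ n) ^ c n + C (c (L + 1) : R) * X ^ (L + 1)) := by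
  rw [prod_Icc_succ_top (by omega)]
  exact X_pow_succ_dvd_mul_one_add_X_pow_pow_sub (X_dvd_prod_one_add_X_pow_pow_sub_one L c)
    (by omega) _

end Congruences

section Digits

variable {p : ℕ}

theorem exists_digits_X_pow_dvd_sub_prod [NeZero p] {g : (ZMod p)[X]} (hg : X ∣ g - 1) (L : ℕ) :
    ∃ c : ℕ → ℕ, (∀ n, c n < p) ∧ X ^ (L + 1) ∣ g - ∏ n ∈ Icc 1 L, (1 + X ^ n) ^ c n := by
  induction L with
  | zero => exact ⟨0, fun _ => Nat.pos_of_neZero p, by simpa using hg⟩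
  | succ L ih =>
    obtain ⟨c, hc, h, hgh⟩ := ih
    set a : ZMod p := h.coeff 0
    set c' := Function.update c (L + 1) a.val with hc'_def
    have hnext : X ^ (L + 2) ∣ g - (∏ n ∈ Icc 1 L, (1 + X ^ n) ^ c' n + C a * X ^ (L + 1)) := by
      have hc' : ∏ n ∈ Icc 1 L, (1 + X ^ n : (ZMod p)[X]) ^ c' n =
          ∏ n ∈ Icc 1 L, (1 + X ^ n) ^ c n :=
        prod_congr rfl fun n hn => by
          rw [hc'_def, Function.update_of_ne (by simp at hn; omega)]
      have : g - (∏ n ∈ Icc 1 L, (1 + X ^ n) ^ c' n + C a * X ^ (L + 1)) =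
          X ^ (L + 1) * (h - C a) := by
        rw [hc', mul_sub, ← hgh]; ring
      rw [this, pow_succ]
      exact mul_dvd_mul_left _ (X_dvd_iff.2 (by simp [a]))
    refine ⟨c', fun n => ?_, ?_⟩
    · rcases eq_or_ne n (L + 1) with rfl | hn
      · simpa [c'] using ZMod.val_lt a
      · simpa [c', hn] using hc n
    · have := dvd_sub hnext (X_pow_dvd_prod_Icc_succ_sub L c')
      rwa [show (c' (L + 1) : ZMod p) = a by simp [c'], sub_sub_sub_cancel_right] at this

theorem digits_eq_of_X_pow_dvd_prod_sub_prod {c c' : ℕ → ℕ} (hc : ∀ n, c n < p)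
    (hc' : ∀ n, c' n < p) {L : ℕ}
    (h : X ^ (L + 1) ∣ ∏ n ∈ Icc 1 L, (1 + X ^ n : (ZMod p)[X]) ^ c n -
      ∏ n ∈ Icc 1 L, (1 + X ^ n) ^ c' n) :
    ∀ n ∈ Icc 1 L, c n = c' n := by
  induction L with
  | zero => simp
  | succ L ih =>
    set P := ∏ n ∈ Icc 1 L, (1 + X ^ n : (ZMod p)[X]) ^ c n
    set P' := ∏ n ∈ Icc 1 L, (1 + X ^ n : (ZMod p)[X]) ^ c' n
    have hQ : X ^ (L + 2) ∣ (P + C (c (L + 1) : ZMod p) * X ^ (L + 1)) -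
        (P' + C (c' (L + 1) : ZMod p) * X ^ (L + 1)) := by
      have := dvd_add (dvd_sub h (X_pow_dvd_prod_Icc_succ_sub L c))
        (X_pow_dvd_prod_Icc_succ_sub L c')
      rwa [sub_sub_sub_cancel_left, sub_add_sub_cancel] at this
    have hcoeff := X_pow_dvd_iff.1 hQ
    have hlow : ∀ n ∈ Icc 1 L, c n = c' n := ih <| X_pow_dvd_iff.2 fun d hd => by
      simpa [coeff_C_mul_X_pow, hd.ne] using hcoeff d (by omega)
    have hP : P = P' := prod_congr rfl fun n hn => by rw [hlow n hn]
    have htop : c (L + 1) = c' (L + 1) := by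
      have := hcoeff (L + 1) (by omega)
      simp only [hP, coeff_sub, coeff_C_mul_X_pow, if_true, add_sub_add_left_eq_sub,
        sub_eq_zero] at this
      simpa [Nat.mod_eq_of_lt (hc _), Nat.mod_eq_of_lt (hc' _)] using
        (ZMod.natCast_eq_natCast_iff' _ _ _).1 this
    intro n hn
    rcases eq_or_ne n (L + 1) with rfl | hne
    · exact htop
    · exact hlow n (by simp at hn ⊢; omega)

end Digits

theorem mul_pow_mem_Icc_of_lt {p ℓ : ℕ} (hp : 0 < p) {s : ℕ → ℕ}
    (hs : ∀ j ∈ (Icc 1 ℓ).filter (¬ p ∣ ·), ∀ k, k < s j ↔ j * p ^ k ≤ ℓ) {j k : ℕ}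
    (hj : j ∈ (Icc 1 ℓ).filter (¬ p ∣ ·)) (hk : k < s j) : j * p ^ k ∈ Icc 1 ℓ :=
  mem_Icc.2 ⟨Nat.mul_pos (mem_Icc.1 (mem_filter.1 hj).1).1 (pow_pos hp k), (hs j hj k).1 hk⟩

theorem prod_Icc_eq_prod_prod_mul_pow {M : Type*} [CommMonoid M] {p ℓ : ℕ} (hp : p.Prime)
    {s : ℕ → ℕ} (hs : ∀ j ∈ (Icc 1 ℓ).filter (¬ p ∣ ·), ∀ k, k < s j ↔ j * p ^ k ≤ ℓ)
    (F : ℕ → M) :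
    ∏ n ∈ Icc 1 ℓ, F n = ∏ j ∈ (Icc 1 ℓ).filter (¬ p ∣ ·), ∏ k ∈ range (s j), F (j * p ^ k) := by
  rw [prod_sigma']
  have hdecomp (n : ℕ) : ordCompl[p] n * p ^ n.factorization p = n := by
    rw [mul_comm, Nat.ordProj_mul_ordCompl_eq_self]
  refine prod_nbij' (fun n => ⟨ordCompl[p] n, n.factorization p⟩) (fun x => x.1 * p ^ x.2)
    ?_ ?_ ?_ ?_ fun n _ => by rw [hdecomp]
  · intro n hn
    obtain ⟨hn1, hnℓ⟩ := mem_Icc.1 hn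
    have hn0 : n ≠ 0 := by omega
    have hj : ordCompl[p] n ∈ (Icc 1 ℓ).filter (¬ p ∣ ·) := mem_filter.2
      ⟨mem_Icc.2 ⟨Nat.ordCompl_pos p hn0, (Nat.ordCompl_le n p).trans hnℓ⟩,
        Nat.not_dvd_ordCompl hp hn0⟩
    exact mem_sigma.2 ⟨hj, mem_range.2 ((hs _ hj _).2 (by rwa [hdecomp]))⟩
  · rintro ⟨j, k⟩ hjk
    obtain ⟨hj, hk⟩ := mem_sigma.1 hjk
    exact mul_pow_mem_Icc_of_lt hp.pos hs hj (mem_range.1 hk)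
  · intro n _
    exact hdecomp n
  · rintro ⟨j, k⟩ hjk
    have hj := (mem_filter.1 (mem_sigma.1 hjk).1).2
    simp [Nat.factorization_mul_pow_of_not_dvd hp hj, hp.pos]

theorem prod_one_add_X_pow_pow_eq_prod_prod {R : Type*} [CommSemiring R] {p ℓ : ℕ}
    [Fact p.Prime] [CharP R p] {s : ℕ → ℕ}
    (hs : ∀ j ∈ (Icc 1 ℓ).filter (¬ p ∣ ·), ∀ k, k < s j ↔ j * p ^ k ≤ ℓ) (c : ℕ → ℕ) :
    ∏ n ∈ Icc 1 ℓ, (1 + X ^ n : R[X]) ^ c n =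
      ∏ j ∈ (Icc 1 ℓ).filter (¬ p ∣ ·), (1 + X ^ j) ^ ∑ k ∈ range (s j), c (j * p ^ k) * p ^ k := by
  rw [prod_Icc_eq_prod_prod_mul_pow Fact.out hs]
  refine prod_congr rfl fun j _ => ?_
  rw [← prod_pow_eq_pow_sum]
  refine prod_congr rfl fun k _ => ?_
  rw [pow_mul' (1 + X ^ j : R[X]), add_pow_char_pow, one_pow, ← pow_mul]

section ExponentDigits

variable {p : ℕ}

/-- For `n = j * p ^ k` with `p ∤ j`, the `k`-th base-`p` digit of `e j`. -/
def expDigit (p : ℕ) (e : ℕ → ℕ) (n : ℕ) : ℕ := e (ordCompl[p] n) / p ^ n.factorization p % p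

theorem expDigit_lt (hp : 0 < p) (e : ℕ → ℕ) (n : ℕ) : expDigit p e n < p := Nat.mod_lt _ hp

theorem expDigit_mul_pow (hp : p.Prime) {j : ℕ} (hj : ¬ p ∣ j) (e : ℕ → ℕ) (k : ℕ) :
    expDigit p e (j * p ^ k) = e j / p ^ k % p := by
  simp [expDigit, Nat.factorization_mul_pow_of_not_dvd hp hj, hp.pos]

theorem sum_expDigit_mul_pow (hp : p.Prime) {j : ℕ} (hj : ¬ p ∣ j) {e : ℕ → ℕ} {t : ℕ}
    (he : e j < p ^ t) : ∑ k ∈ range t, expDigit p e (j * p ^ k) * p ^ k = e j := by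
  simp only [expDigit_mul_pow hp hj]
  rw [Nat.sum_range_div_pow_mod_mul_pow, Nat.mod_eq_of_lt he]

theorem prod_one_add_X_pow_pow_eq_prod_expDigit {R : Type*} [CommSemiring R] [Fact p.Prime]
    [CharP R p] {ℓ : ℕ} {s : ℕ → ℕ}
    (hs : ∀ j ∈ (Icc 1 ℓ).filter (¬ p ∣ ·), ∀ k, k < s j ↔ j * p ^ k ≤ ℓ) {e : ℕ → ℕ}
    (he : ∀ j ∈ (Icc 1 ℓ).filter (¬ p ∣ ·), e j < p ^ s j) :
    ∏ j ∈ (Icc 1 ℓ).filter (¬ p ∣ ·), (1 + X ^ j : R[X]) ^ e j =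
      ∏ n ∈ Icc 1 ℓ, (1 + X ^ n) ^ expDigit p e n := by
  rw [prod_one_add_X_pow_pow_eq_prod_prod hs]
  refine prod_congr rfl fun j hj => ?_
  rw [sum_expDigit_mul_pow Fact.out (mem_filter.1 hj).2 (he j hj)]

end ExponentDigits

theorem typeII_classes_generated_by_x_pow_j_add_one_general
    (p : ℕ) [Fact p.Prime] (ℓ : ℕ)
    (s : ℕ → ℕ)
    (hs : ∀ j ∈ (Finset.Icc 1 ℓ).filter (fun j => ¬ p ∣ j),
      0 < s j ∧ ℓ < j * p ^ s j ∧ ∀ s' : ℕ, 0 < s' → ℓ < j * p ^ s' → s j ≤ s')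
    (f : Polynomial (ZMod p)) (hf : f.Monic) :
    ∃! e : ℕ → ℕ,
      (∀ j, j ∉ (Finset.Icc 1 ℓ).filter (fun j => ¬ p ∣ j) → e j = 0) ∧
      (∀ j ∈ (Finset.Icc 1 ℓ).filter (fun j => ¬ p ∣ j), e j < p ^ s j) ∧
      TypeIIEquiv ℓ f
        (∏ j ∈ (Finset.Icc 1 ℓ).filter (fun j => ¬ p ∣ j),
          ((X : Polynomial (ZMod p)) ^ j + 1) ^ e j) := by
  have hp : p.Prime := Fact.out
  set S := (Icc 1 ℓ).filter (fun j => ¬ p ∣ j)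
  have hS : ∀ j ∈ S, ∀ k, k < s j ↔ j * p ^ k ≤ ℓ := fun j hj =>
    Nat.lt_iff_mul_pow_le hp.pos (mem_Icc.1 (mem_filter.1 hj).1).2 (hs j hj).2.1 (hs j hj).2.2
  have hequiv (e : ℕ → ℕ) : TypeIIEquiv ℓ f (∏ j ∈ S, (X ^ j + 1) ^ e j) ↔
      X ^ (ℓ + 1) ∣ f.reverse - ∏ j ∈ S, (1 + X ^ j) ^ e j := by
    rw [TypeIIEquiv, reverse_prod_X_pow_add_one_pow]
  obtain ⟨c, hc, hfc⟩ := exists_digits_X_pow_dvd_sub_prod hf.X_dvd_reverse_sub_one ℓ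
  refine ⟨fun j => if j ∈ S then ∑ k ∈ range (s j), c (j * p ^ k) * p ^ k else 0,
    ⟨fun j hj => if_neg hj, fun j hj => ?_, ?_⟩, ?_⟩
  · simp only [if_pos hj]
    exact Nat.sum_range_mul_pow_lt fun k => hc _
  · rw [hequiv, ← prod_congr rfl fun j hj => by rw [if_pos hj]]
    rwa [← prod_one_add_X_pow_pow_eq_prod_prod hS]
  · rintro e ⟨he0, helt, hfe⟩
    have hdig := digits_eq_of_X_pow_dvd_prod_sub_prod hc (expDigit_lt hp.pos e) (L := ℓ) <| by
      rw [← prod_one_add_X_pow_pow_eq_prod_expDigit hS helt,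
        ← sub_sub_sub_cancel_left _ _ f.reverse]
      exact dvd_sub ((hequiv e).1 hfe) hfc
    funext j
    by_cases hj : j ∈ S
    · rw [if_pos hj, ← sum_expDigit_mul_pow hp (mem_filter.1 hj).2 (helt j hj)]
      refine sum_congr rfl fun k hk => ?_
      rw [hdig _ (mul_pow_mem_Icc_of_lt hp.pos hS hj (mem_range.1 hk))]
    · rw [if_neg hj, he0 j hj]

theorem typeII_classes_generated_by_x_pow_j_add_one
    (p : ℕ) [Fact p.Prime] (ℓ : ℕ) (hℓ : 1 ≤ ℓ)
    (s : ℕ → ℕ)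
    (hs : ∀ j ∈ (Finset.Icc 1 ℓ).filter (fun j => ¬ p ∣ j),
      0 < s j ∧ ℓ < j * p ^ s j ∧ ∀ s' : ℕ, 0 < s' → ℓ < j * p ^ s' → s j ≤ s')
    (f : Polynomial (ZMod p)) (hf : f.Monic) :
    ∃! e : ℕ → ℕ,
      (∀ j, j ∉ (Finset.Icc 1 ℓ).filter (fun j => ¬ p ∣ j) → e j = 0) ∧
      (∀ j ∈ (Finset.Icc 1 ℓ).filter (fun j => ¬ p ∣ j), e j < p ^ s j) ∧
      TypeIIEquiv ℓ f
        (∏ j ∈ (Finset.Icc 1 ℓ).filter (fun j => ¬ p ∣ j),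
          ((X : Polynomial (ZMod p)) ^ j + 1) ^ e j) :=
  typeII_classes_generated_by_x_pow_j_add_one_general p ℓ s hs f hf
end
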